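/- (Existence and uniqueness for the three-phase Stefan problem with Neumann condition, reduced form.) Assume α₂ > α₃ and q₀ > q₂, where q₂ := k₂·(B−C)/(√(α₂·π)·erf(z₀·√(α₁/α₂))). Then there exists a unique λ₁ > z₀ such that Q(λ₁) = P(λ₂), where λ₂ ≥ 0 is the unique number satisfying erf(λ₂·√(α₁/α₂)) = H(λ₁). -/

import Mathlib

noncomputable section

/-- The error function `erf x = (2/√π) ∫₀ˣ exp(−s²) ds`. -/
def erf (x : ℝ) : ℝ := (2 / Real.sqrt Real.pi) * ∫ s in (0:ℝ)..x, Real.exp (-(s^2))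

/-- The complementary error function. -/
def erfc (x : ℝ) : ℝ := 1 - erf x

/-- Physical data of the three-phase Stefan problem: positive thermal conductivities,
specific heats, mass density, latent heats, and temperatures `B > C > D`. -/
structure Params where
  k₁ : ℝ
  k₂ : ℝ
  k₃ : ℝ
  c₁ : ℝ
  c₂ : ℝ
  c₃ : ℝ
  ρ : ℝ
  ℓ₁ : ℝ
  ℓ₂ : ℝ
  B : ℝ
  C : ℝ
  D : ℝ
  hk₁ : 0 < k₁
  hk₂ : 0 < k₂
  hk₃ : 0 < k₃
  hc₁ : 0 < c₁
  hc₂ : 0 < c₂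
  hc₃ : 0 < c₃
  hρ : 0 < ρ
  hℓ₁ : 0 < ℓ₁
  hℓ₂ : 0 < ℓ₂
  hBC : C < B
  hCD : D < C

namespace Params

/-- Thermal diffusivity of phase 1. -/
def α₁ (p : Params) : ℝ := p.k₁ / (p.ρ * p.c₁)

/-- Thermal diffusivity of phase 2. -/
def α₂ (p : Params) : ℝ := p.k₂ / (p.ρ * p.c₂)

/-- Thermal diffusivity of phase 3. -/
def α₃ (p : Params) : ℝ := p.k₃ / (p.ρ * p.c₃)

/-- Stefan number `Ste₁ = c₁(C−D)/ℓ₁`. -/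
def Ste₁ (p : Params) : ℝ := p.c₁ * (p.C - p.D) / p.ℓ₁

/-- Stefan number `Ste₂ = c₂(B−C)/ℓ₂`. -/
def Ste₂ (p : Params) : ℝ := p.c₂ * (p.B - p.C) / p.ℓ₂

/-- `φ(z) = z + (Ste₁/√π) exp(−z²)/erfc(z)`. -/
def φ (p : Params) (z : ℝ) : ℝ :=
  z + (p.Ste₁ / Real.sqrt Real.pi) * Real.exp (-(z^2)) / erfc z

/-- `H(z) = erf(z√(α₁/α₂)) − (Ste₂/√π)(ℓ₂/ℓ₁)√(k₂c₁/(k₁c₂)) exp(−z²α₁/α₂)/φ(z)`. -/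
def H (p : Params) (z : ℝ) : ℝ :=
  erf (z * Real.sqrt (p.α₁ / p.α₂)) -
    (p.Ste₂ / Real.sqrt Real.pi) * (p.ℓ₂ / p.ℓ₁) *
      Real.sqrt (p.k₂ * p.c₁ / (p.k₁ * p.c₂)) *
      (Real.exp (-(z^2) * (p.α₁ / p.α₂)) / p.φ z)

/-- `Q(z) = (ℓ₁/ℓ₂) φ(z) exp(z² α₁/α₂)`. -/
def Q (p : Params) (z : ℝ) : ℝ :=
  (p.ℓ₁ / p.ℓ₂) * p.φ z * Real.exp (z^2 * (p.α₁ / p.α₂))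

/-- The function `T` arising from the Robin (convective) boundary condition with
heat-transfer coefficient `h₀` and bulk temperature `Ainf`. -/
def T (p : Params) (h₀ Ainf : ℝ) (z : ℝ) : ℝ :=
  (p.Ste₂ / (Real.sqrt Real.pi * p.c₂)) * ((Ainf - p.B) / (p.B - p.C)) *
    Real.sqrt (p.k₃ * p.c₁ * p.c₃ / p.k₁) *
    (Real.exp (-(z^2) * p.α₁ * (1 / p.α₃ - 1 / p.α₂)) /
      (p.k₃ / (h₀ * Real.sqrt (Real.pi * p.α₃)) + erf (z * Real.sqrt (p.α₁ / p.α₃)))) -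
  z * Real.exp (z^2 * (p.α₁ / p.α₂))

/-- The function `V` arising from the Dirichlet boundary condition with temperature `A`. -/
def V (p : Params) (A : ℝ) (z : ℝ) : ℝ :=
  ((A - p.B) / p.ℓ₂) * Real.sqrt (p.c₁ * p.c₃ * p.k₃ / (Real.pi * p.k₁)) *
    (Real.exp (-(z^2) * (p.α₁ / p.α₃ - p.α₁ / p.α₂)) / erf (z * Real.sqrt (p.α₁ / p.α₃))) -
  z * Real.exp (z^2 * (p.α₁ / p.α₂))

/-- The function `P` arising from the Neumann boundary condition with flux coefficient `q₀`. -/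
def P (p : Params) (q₀ : ℝ) (z : ℝ) : ℝ :=
  Real.exp (z^2 * (p.α₁ / p.α₂)) *
    (-z + (q₀ / p.ℓ₂) * Real.sqrt (p.c₁ / (p.ρ * p.k₁)) * Real.exp (-(z^2) * (p.α₁ / p.α₃)))

/-- Critical heat-transfer coefficient `h₂`. -/
def h2 (p : Params) (Ainf z₀ : ℝ) : ℝ :=
  ((p.B - p.C) / (Ainf - p.B)) *
    Real.sqrt (p.k₂ * p.k₃ * p.c₂ / (Real.pi * p.c₃ * p.α₃)) *
    (1 / erf (z₀ * Real.sqrt (p.α₁ / p.α₂)))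

/-- Critical heat-flux coefficient `q₂`. -/
def q2 (p : Params) (z₀ : ℝ) : ℝ :=
  p.k₂ * (p.B - p.C) / (Real.sqrt (p.α₂ * Real.pi) * erf (z₀ * Real.sqrt (p.α₁ / p.α₂)))

end Params

/-!
Since `H` increases from `H(z₀) = 0` and stays below `1`, the equation
`erf(λ₂√(α₁/α₂)) = H(λ₁)` defines `λ₂ ≥ 0` as a continuous nondecreasing function of
`λ₁ ≥ z₀` with `λ₂(z₀) = 0`. Then `F(λ₁) = Q(λ₁) − P(λ₂(λ₁))` is strictly increasing on
`[z₀, ∞)`: `Q` increases because `φ` does (Mills' inequality `z erfc z ≤ exp(−z²)/√π` makes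
`exp(−z²)/erfc z` nondecreasing), and `P` decreases on `[0, ∞)` because `α₂ > α₃`.
At `z₀`, `H(z₀) = 0` turns `Q(z₀)` into the value of `P(0)` at the flux `q₂ < q₀`, so
`F(z₀) < 0`, while `Q(z) ≥ (ℓ₁/ℓ₂) z` makes `F` eventually positive; the intermediate
value theorem gives the unique zero.
-/

open MeasureTheory Real Set Filter Topology Function

theorem StrictMono.continuousOn_invFun {α β : Type*} [LinearOrder α] [TopologicalSpace α]
    [OrderTopology α] [Nonempty α] [LinearOrder β] [TopologicalSpace β] [OrderTopology β]
    {f : α → β} (hf : StrictMono f) (hr : (range f).OrdConnected) :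
    ContinuousOn (invFun f) (range f) := by
  rw [continuousOn_iff_continuous_domRestrict]
  have hrestrict : (range f).domRestrict (invFun f) = (hf.orderIso f).symm := by
    ext ⟨_, x, rfl⟩
    simp only [domRestrict_apply, leftInverse_invFun hf.injective x]
    exact ((hf.orderIso f).symm_apply_apply x).symm
  rw [hrestrict]
  exact (hf.orderIso f).symm.continuous

theorem exists_unique_zero_of_strictMonoOn_Ici {F : ℝ → ℝ} {a b : ℝ}
    (hmono : StrictMonoOn F (Ici a)) (hcont : ContinuousOn F (Ici a))
    (ha : F a < 0) (hb : a ≤ b) (hFb : 0 < F b) :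
    ∃! x, a < x ∧ F x = 0 := by
  obtain ⟨c, hc, hFc⟩ :=
    intermediate_value_Icc hb (hcont.mono Icc_subset_Ici_self) ⟨ha.le, hFb.le⟩
  have hac : a < c := hc.1.lt_of_ne (by rintro rfl; linarith)
  refine ⟨c, ⟨hac, hFc⟩, fun x ⟨hax, hFx⟩ => ?_⟩
  exact hmono.injOn (mem_Ici.2 hax.le) (mem_Ici.2 hac.le) (hFx.trans hFc.symm)

lemma continuous_exp_neg_sq : Continuous fun s : ℝ => exp (-s ^ 2) := by fun_prop

lemma integrableOn_exp_neg_sq_Ioi (a : ℝ) : IntegrableOn (fun s : ℝ => exp (-s ^ 2)) (Ioi a) := by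
  simpa using (integrable_exp_neg_mul_sq one_pos).integrableOn (s := Ioi a)

lemma integral_exp_neg_sq_Ioi_zero : ∫ s in Ioi (0 : ℝ), exp (-s ^ 2) = √π / 2 := by
  simpa using integral_gaussian_Ioi 1

lemma erf_hasDerivAt (x : ℝ) : HasDerivAt erf (2 / √π * exp (-x ^ 2)) x :=
  (intervalIntegral.integral_hasDerivAt_right (continuous_exp_neg_sq.intervalIntegrable 0 x)
    (continuous_exp_neg_sq.stronglyMeasurableAtFilter _ _)
    continuous_exp_neg_sq.continuousAt).const_mul _

lemma continuous_erf : Continuous erf :=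
  continuous_iff_continuousAt.2 fun x => (erf_hasDerivAt x).continuousAt

lemma erf_zero : erf 0 = 0 := by simp [erf]

lemma erf_strictMono : StrictMono erf :=
  strictMono_of_deriv_pos fun x => by rw [(erf_hasDerivAt x).deriv]; positivity

lemma erf_pos {x : ℝ} (hx : 0 < x) : 0 < erf x := erf_zero ▸ erf_strictMono hx

lemma erfc_eq_integral_Ioi {x : ℝ} (hx : 0 ≤ x) :
    erfc x = 2 / √π * ∫ s in Ioi x, exp (-s ^ 2) := by
  have hsplit : (∫ s in Ioc 0 x, exp (-s ^ 2)) + ∫ s in Ioi x, exp (-s ^ 2) = √π / 2 := by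
    rw [← integral_exp_neg_sq_Ioi_zero, ← setIntegral_union (Ioc_disjoint_Ioi le_rfl)
      measurableSet_Ioi ((integrableOn_exp_neg_sq_Ioi 0).mono_set Ioc_subset_Ioi_self)
      (integrableOn_exp_neg_sq_Ioi x), Ioc_union_Ioi_eq_Ioi hx]
  have hπ : 0 < √π := sqrt_pos.2 pi_pos
  rw [erfc, erf, intervalIntegral.integral_of_le hx, eq_sub_of_add_eq' hsplit]
  field_simp

lemma erfc_pos (x : ℝ) : 0 < erfc x := by
  rcases le_or_gt x 0 with hx | hx
  · have : erf x ≤ 0 := erf_zero ▸ erf_strictMono.monotone hx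
    rw [erfc]
    linarith
  · rw [erfc_eq_integral_Ioi hx.le]
    refine mul_pos (by positivity) ?_
    rw [setIntegral_pos_iff_support_of_nonneg_ae
      (Eventually.of_forall fun t => (exp_pos _).le) (integrableOn_exp_neg_sq_Ioi x)]
    simp [Function.support, exp_ne_zero]

lemma erf_lt_one (x : ℝ) : erf x < 1 := sub_pos.1 (erfc_pos x)

lemma tendsto_erf_atTop : Tendsto erf atTop (𝓝 1) := by
  have h := (intervalIntegral_tendsto_integral_Ioi 0 (integrableOn_exp_neg_sq_Ioi 0)
    tendsto_id).const_mul (2 / √π)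
  have hone : 2 / √π * (√π / 2) = 1 := by
    have hπ : 0 < √π := sqrt_pos.2 pi_pos
    field_simp
  rwa [integral_exp_neg_sq_Ioi_zero, hone] at h

lemma integrableOn_mul_exp_neg_sq_Ioi (a : ℝ) :
    IntegrableOn (fun s : ℝ => s * exp (-s ^ 2)) (Ioi a) := by
  simpa using (integrable_mul_exp_neg_mul_sq one_pos).integrableOn (s := Ioi a)

lemma integral_mul_exp_neg_sq_Ioi (z : ℝ) :
    ∫ s in Ioi z, s * exp (-s ^ 2) = exp (-z ^ 2) / 2 := by
  have hderiv : ∀ x ∈ Ici z, HasDerivAt (fun s : ℝ => -exp (-s ^ 2) / 2) (x * exp (-x ^ 2)) x :=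
    fun x _ => ((((hasDerivAt_pow 2 x).neg).exp).neg.div_const 2).congr_deriv (by simp; ring)
  have hlim : Tendsto (fun s : ℝ => -exp (-s ^ 2) / 2) atTop (𝓝 0) := by
    have h := ((tendsto_exp_atBot.comp
      (tendsto_neg_atTop_atBot.comp (tendsto_pow_atTop two_ne_zero))).neg.div_const 2)
    simpa [Function.comp_def] using h
  rw [integral_Ioi_of_hasDerivAt_of_tendsto' hderiv (integrableOn_mul_exp_neg_sq_Ioi z) hlim]
  ring

lemma mul_erfc_le {z : ℝ} (hz : 0 ≤ z) : z * erfc z ≤ exp (-z ^ 2) / √π := by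
  have hmono : (∫ s in Ioi z, z * exp (-s ^ 2)) ≤ ∫ s in Ioi z, s * exp (-s ^ 2) :=
    setIntegral_mono_on ((integrableOn_exp_neg_sq_Ioi z).const_mul z)
      (integrableOn_mul_exp_neg_sq_Ioi z) measurableSet_Ioi fun s hs => mul_le_mul_of_nonneg_right (le_of_lt hs) (exp_pos _).le
  rw [integral_const_mul, integral_mul_exp_neg_sq_Ioi] at hmono
  have hπ : 0 < √π := sqrt_pos.2 pi_pos
  calc z * erfc z = 2 / √π * (z * ∫ s in Ioi z, exp (-s ^ 2)) := by
        rw [erfc_eq_integral_Ioi hz]; ring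
    _ ≤ 2 / √π * (exp (-z ^ 2) / 2) := by gcongr
    _ = exp (-z ^ 2) / √π := by ring

lemma monotoneOn_exp_neg_sq_div_erfc : MonotoneOn (fun z => exp (-z ^ 2) / erfc z) (Ici 0) := by
  have hderiv : ∀ x, HasDerivAt (fun z => exp (-z ^ 2) / erfc z)
      ((exp (-x ^ 2) * (-(2 * x)) * erfc x - exp (-x ^ 2) * (-(2 / √π * exp (-x ^ 2)))) /
        erfc x ^ 2) x := fun x =>
    ((((hasDerivAt_pow 2 x).neg).exp).congr_deriv (by simp)).div
      ((erf_hasDerivAt x).const_sub 1) (erfc_pos x).ne'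
  refine monotoneOn_of_deriv_nonneg (convex_Ici 0)
    (fun x _ => (hderiv x).continuousAt.continuousWithinAt)
    (fun x _ => (hderiv x).differentiableAt.differentiableWithinAt) fun x hx => ?_
  rw [interior_Ici] at hx
  rw [(hderiv x).deriv]
  have hmills := mul_le_mul_of_nonneg_left (mul_erfc_le (le_of_lt hx))
    (by positivity : (0 : ℝ) ≤ 2 * exp (-x ^ 2))
  apply div_nonneg _ (sq_nonneg _)
  calc (0 : ℝ) ≤ 2 * exp (-x ^ 2) * (exp (-x ^ 2) / √π) - 2 * exp (-x ^ 2) * (x * erfc x) := by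
        linarith
    _ = _ := by ring

namespace Params

variable (p : Params)

lemma α₁_pos : 0 < p.α₁ := div_pos p.hk₁ (mul_pos p.hρ p.hc₁)

lemma α₂_pos : 0 < p.α₂ := div_pos p.hk₂ (mul_pos p.hρ p.hc₂)

lemma α₃_pos : 0 < p.α₃ := div_pos p.hk₃ (mul_pos p.hρ p.hc₃)

lemma α₁_div_α₂_pos : 0 < p.α₁ / p.α₂ := div_pos p.α₁_pos p.α₂_pos

lemma Ste₁_pos : 0 < p.Ste₁ := div_pos (mul_pos p.hc₁ (sub_pos.2 p.hCD)) p.hℓ₁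

lemma Ste₂_pos : 0 < p.Ste₂ := div_pos (mul_pos p.hc₂ (sub_pos.2 p.hBC)) p.hℓ₂

lemma φ_eq (z : ℝ) : p.φ z = z + p.Ste₁ / √π * (exp (-z ^ 2) / erfc z) := by
  rw [φ, mul_div_assoc]

lemma le_φ (z : ℝ) : z ≤ p.φ z := by
  have := p.Ste₁_pos
  have := erfc_pos z
  rw [φ_eq]
  have : 0 < p.Ste₁ / √π * (exp (-z ^ 2) / erfc z) := by positivity
  linarith

lemma φ_pos {z : ℝ} (hz : 0 ≤ z) : 0 < p.φ z := by
  have := p.Ste₁_pos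
  have := erfc_pos z
  rw [φ_eq]
  positivity

lemma φ_monotoneOn : MonotoneOn p.φ (Ici 0) := fun x hx y hy hxy => by
  have := p.Ste₁_pos
  rw [φ_eq, φ_eq]
  exact add_le_add hxy (mul_le_mul_of_nonneg_left (monotoneOn_exp_neg_sq_div_erfc hx hy hxy)
    (by positivity))

lemma continuous_φ : Continuous p.φ :=
  continuous_id.add ((continuous_const.mul continuous_exp_neg_sq).div
    (continuous_const.sub continuous_erf) fun z => (erfc_pos z).ne')

lemma Q_strictMonoOn : StrictMonoOn p.Q (Ici 0) := fun x hx y hy hxy => by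
  have hφ := p.φ_monotoneOn hx hy hxy.le
  have hφy := (p.φ_pos hx).trans_le hφ
  have := p.α₁_div_α₂_pos
  have := div_pos p.hℓ₁ p.hℓ₂
  have hx : (0 : ℝ) ≤ x := hx
  unfold Q
  calc p.ℓ₁ / p.ℓ₂ * p.φ x * exp (x ^ 2 * (p.α₁ / p.α₂))
      ≤ p.ℓ₁ / p.ℓ₂ * p.φ y * exp (x ^ 2 * (p.α₁ / p.α₂)) := by gcongr
    _ < p.ℓ₁ / p.ℓ₂ * p.φ y * exp (y ^ 2 * (p.α₁ / p.α₂)) := by gcongr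

lemma continuous_Q : Continuous p.Q :=
  (continuous_const.mul p.continuous_φ).mul (by fun_prop)

lemma tendsto_Q_atTop : Tendsto p.Q atTop atTop := by
  refine tendsto_atTop_mono' atTop ?_ (tendsto_id.const_mul_atTop (div_pos p.hℓ₁ p.hℓ₂))
  filter_upwards [eventually_ge_atTop 0] with z hz
  have := p.φ_pos hz
  have := div_pos p.hℓ₁ p.hℓ₂
  calc p.ℓ₁ / p.ℓ₂ * id z ≤ p.ℓ₁ / p.ℓ₂ * p.φ z * 1 := by
        rw [mul_one]; gcongr; exact p.le_φ z
    _ ≤ p.Q z := by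
        unfold Q
        gcongr
        exact one_le_exp (by have := p.α₁_div_α₂_pos; positivity)

lemma H_const_pos : 0 < p.Ste₂ / √π * (p.ℓ₂ / p.ℓ₁) * √(p.k₂ * p.c₁ / (p.k₁ * p.c₂)) := by
  have := p.Ste₂_pos
  have := p.hℓ₁
  have := p.hℓ₂
  have : 0 < p.k₂ * p.c₁ / (p.k₁ * p.c₂) := by
    have := p.hk₁; have := p.hk₂; have := p.hc₁; have := p.hc₂; positivity
  positivity

lemma H_monotoneOn : MonotoneOn p.H (Ici 0) := fun x hx y hy hxy => by
  have hx : (0 : ℝ) ≤ x := hx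
  have := p.H_const_pos
  have := p.α₁_div_α₂_pos
  have := p.φ_pos hx
  have hφ := p.φ_monotoneOn hx hy hxy
  unfold H
  gcongr ?_ - _ * ?_
  · exact erf_strictMono.monotone (by gcongr)
  · exact div_le_div₀ (exp_pos _).le (exp_le_exp.2 (by gcongr)) (p.φ_pos hx) hφ

lemma H_lt_one {z : ℝ} (hz : 0 ≤ z) : p.H z < 1 := by
  have := p.H_const_pos
  have := p.φ_pos hz
  have := erf_lt_one (z * √(p.α₁ / p.α₂))
  unfold H
  have : 0 < p.Ste₂ / √π * (p.ℓ₂ / p.ℓ₁) * √(p.k₂ * p.c₁ / (p.k₁ * p.c₂)) *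
    (exp (-z ^ 2 * (p.α₁ / p.α₂)) / p.φ z) := by positivity
  linarith

lemma continuousOn_H : ContinuousOn p.H (Ici 0) := by
  unfold H
  refine (continuous_erf.comp (by fun_prop)).continuousOn.sub (continuousOn_const.mul ?_)
  exact (by fun_prop : Continuous fun z : ℝ => exp (-z ^ 2 * (p.α₁ / p.α₂))).continuousOn.div
    p.continuous_φ.continuousOn fun z hz => (p.φ_pos hz).ne'

lemma continuous_P (q₀ : ℝ) : Continuous (p.P q₀) := by
  unfold P
  fun_prop

lemma P_zero (q₀ : ℝ) : p.P q₀ 0 = q₀ / p.ℓ₂ * √(p.c₁ / (p.ρ * p.k₁)) := by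
  simp [P]

lemma P_eq (q₀ z : ℝ) : p.P q₀ z = -(z * exp (z ^ 2 * (p.α₁ / p.α₂))) +
    q₀ / p.ℓ₂ * √(p.c₁ / (p.ρ * p.k₁)) * exp (z ^ 2 * (p.α₁ / p.α₂ - p.α₁ / p.α₃)) := by
  have hexp : exp (z ^ 2 * (p.α₁ / p.α₂ - p.α₁ / p.α₃)) =
      exp (z ^ 2 * (p.α₁ / p.α₂)) * exp (-z ^ 2 * (p.α₁ / p.α₃)) := by
    rw [← exp_add]; ring_nf
  rw [hexp, P]
  ring

lemma P_antitoneOn {q₀ : ℝ} (hα : p.α₃ < p.α₂) (hq₀ : 0 ≤ q₀) : AntitoneOn (p.P q₀) (Ici 0) :=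
  fun u hu v hv huv => by
  have hu : (0 : ℝ) ≤ u := hu
  have := p.α₁_div_α₂_pos
  have hbd : p.α₁ / p.α₂ - p.α₁ / p.α₃ ≤ 0 :=
    sub_nonpos.2 (div_le_div_of_nonneg_left p.α₁_pos.le p.α₃_pos hα.le)
  have := p.hℓ₂
  rw [P_eq, P_eq]
  gcongr ?_ + _ * ?_
  · gcongr
  · exact exp_le_exp.2 (mul_le_mul_of_nonpos_right (by gcongr) hbd)

lemma sqrt_α₂_mul_sqrt_mul :
    √p.α₂ * √(p.k₂ * p.c₁ / (p.k₁ * p.c₂)) * p.c₂ = √(p.c₁ / (p.ρ * p.k₁)) * p.k₂ := by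
  have := p.hk₁; have := p.hk₂; have := p.hc₁; have := p.hc₂; have := p.hρ
  have := p.α₂_pos
  rw [← pow_left_inj₀ (by positivity) (by positivity) two_ne_zero, mul_pow, mul_pow, mul_pow,
    sq_sqrt (by positivity), sq_sqrt (by positivity), sq_sqrt (by positivity), α₂]
  field_simp

lemma q2_pos {z₀ : ℝ} (hz₀ : 0 < z₀) : 0 < p.q2 z₀ := by
  have := p.hk₂
  have := sub_pos.2 p.hBC
  have := sqrt_pos.2 (mul_pos p.α₂_pos pi_pos)
  have := erf_pos (mul_pos hz₀ (sqrt_pos.2 p.α₁_div_α₂_pos))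
  unfold q2
  positivity

lemma P_q2_zero {z₀ : ℝ} (hz₀ : 0 ≤ z₀) (hH₀ : p.H z₀ = 0) : p.P (p.q2 z₀) 0 = p.Q z₀ := by
  have herf : erf (z₀ * √(p.α₁ / p.α₂)) = p.Ste₂ / √π * (p.ℓ₂ / p.ℓ₁) *
      √(p.k₂ * p.c₁ / (p.k₁ * p.c₂)) * (exp (-z₀ ^ 2 * (p.α₁ / p.α₂)) / p.φ z₀) := by
    unfold H at hH₀; linarith
  have hsqrt := p.sqrt_α₂_mul_sqrt_mul
  rw [P_zero, q2, herf, Q, Ste₂, sqrt_mul p.α₂_pos.le, neg_mul, exp_neg]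
  set A := √(p.c₁ / (p.ρ * p.k₁))
  set W := √(p.k₂ * p.c₁ / (p.k₁ * p.c₂))
  have := p.hℓ₁; have := p.hℓ₂; have := p.hc₂; have := sub_pos.2 p.hBC
  have := p.φ_pos hz₀
  have := sqrt_pos.2 p.α₂_pos
  have := sqrt_pos.2 pi_pos
  have : 0 < W := sqrt_pos.2 (div_pos (mul_pos p.hk₂ p.hc₁) (mul_pos p.hk₁ p.hc₂))
  field_simp
  linear_combination -hsqrt

lemma P_zero_strictMono : StrictMono fun q₀ => p.P q₀ 0 := fun q q' hq => by
  have := p.hℓ₂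
  have := sqrt_pos.2 (div_pos p.hc₁ (mul_pos p.hρ p.hk₁))
  simp only [P_zero]
  gcongr

def ψ (t : ℝ) : ℝ := erf (t * √(p.α₁ / p.α₂))

lemma ψ_strictMono : StrictMono p.ψ := fun _ _ h =>
  erf_strictMono (mul_lt_mul_of_pos_right h (sqrt_pos.2 p.α₁_div_α₂_pos))

lemma ψ_zero : p.ψ 0 = 0 := by simp [ψ, erf_zero]

lemma ordConnected_range_ψ : (range p.ψ).OrdConnected :=
  (isPreconnected_range (continuous_erf.comp (by fun_prop))).ordConnected

lemma H_mem_range_ψ {z₀ z : ℝ} (hz₀ : 0 ≤ z₀) (hH₀ : p.H z₀ = 0) (hz : z₀ ≤ z) :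
    p.H z ∈ range p.ψ := by
  have hψ : Tendsto p.ψ atTop (𝓝 1) := tendsto_erf_atTop.comp
    (tendsto_id.atTop_mul_const (sqrt_pos.2 p.α₁_div_α₂_pos))
  obtain ⟨t, ht⟩ := (hψ.eventually (eventually_gt_nhds (p.H_lt_one (hz₀.trans hz)))).exists
  refine p.ordConnected_range_ψ.out (mem_range_self 0) (mem_range_self t) ⟨?_, ht.le⟩
  rw [ψ_zero, ← hH₀]
  exact p.H_monotoneOn hz₀ (hz₀.trans hz) hz

-- `invFun` returns a junk value unless `H z ∈ range ψ`, which holds for `z ≥ z₀`.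
def lam₂ (z : ℝ) : ℝ := invFun p.ψ (p.H z)

lemma ψ_lam₂ {z₀ z : ℝ} (hz₀ : 0 ≤ z₀) (hH₀ : p.H z₀ = 0) (hz : z₀ ≤ z) :
    p.ψ (p.lam₂ z) = p.H z :=
  invFun_eq (p.H_mem_range_ψ hz₀ hH₀ hz)

lemma lam₂_monotoneOn {z₀ : ℝ} (hz₀ : 0 ≤ z₀) (hH₀ : p.H z₀ = 0) :
    MonotoneOn p.lam₂ (Ici z₀) := fun x hx y hy hxy => by
  rw [← p.ψ_strictMono.le_iff_le, p.ψ_lam₂ hz₀ hH₀ hx, p.ψ_lam₂ hz₀ hH₀ hy]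
  exact p.H_monotoneOn (hz₀.trans hx) (hz₀.trans hy) hxy

lemma lam₂_self {z₀ : ℝ} (hz₀ : 0 ≤ z₀) (hH₀ : p.H z₀ = 0) : p.lam₂ z₀ = 0 :=
  p.ψ_strictMono.injective (by rw [p.ψ_lam₂ hz₀ hH₀ le_rfl, hH₀, ψ_zero])

lemma lam₂_nonneg {z₀ z : ℝ} (hz₀ : 0 ≤ z₀) (hH₀ : p.H z₀ = 0) (hz : z₀ ≤ z) :
    0 ≤ p.lam₂ z :=
  p.lam₂_self hz₀ hH₀ ▸ p.lam₂_monotoneOn hz₀ hH₀ self_mem_Ici hz hz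

lemma eq_lam₂_iff {z₀ z t : ℝ} (hz₀ : 0 ≤ z₀) (hH₀ : p.H z₀ = 0) (hz : z₀ ≤ z) :
    (0 ≤ t ∧ p.ψ t = p.H z) ↔ t = p.lam₂ z := by
  refine ⟨fun ⟨_, ht⟩ => p.ψ_strictMono.injective (ht.trans (p.ψ_lam₂ hz₀ hH₀ hz).symm), ?_⟩
  rintro rfl
  exact ⟨p.lam₂_nonneg hz₀ hH₀ hz, p.ψ_lam₂ hz₀ hH₀ hz⟩

lemma continuousOn_lam₂ {z₀ : ℝ} (hz₀ : 0 ≤ z₀) (hH₀ : p.H z₀ = 0) :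
    ContinuousOn p.lam₂ (Ici z₀) :=
  (p.ψ_strictMono.continuousOn_invFun p.ordConnected_range_ψ).comp
    (p.continuousOn_H.mono (Ici_subset_Ici.2 hz₀)) fun _ hz => p.H_mem_range_ψ hz₀ hH₀ hz

lemma P_lam₂_antitoneOn {q₀ z₀ : ℝ} (hα : p.α₃ < p.α₂) (hq₀ : 0 ≤ q₀) (hz₀ : 0 ≤ z₀)
    (hH₀ : p.H z₀ = 0) : AntitoneOn (fun z => p.P q₀ (p.lam₂ z)) (Ici z₀) :=
  fun _ hx _ hy hxy => p.P_antitoneOn hα hq₀ (p.lam₂_nonneg hz₀ hH₀ hx)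
    (p.lam₂_nonneg hz₀ hH₀ hy) (p.lam₂_monotoneOn hz₀ hH₀ hx hy hxy)

lemma Q_sub_P_lam₂_strictMonoOn {q₀ z₀ : ℝ} (hα : p.α₃ < p.α₂) (hq₀ : 0 ≤ q₀) (hz₀ : 0 ≤ z₀)
    (hH₀ : p.H z₀ = 0) : StrictMonoOn (fun z => p.Q z - p.P q₀ (p.lam₂ z)) (Ici z₀) :=
  fun x hx y hy hxy => by
    have hQ := p.Q_strictMonoOn (hz₀.trans hx) (hz₀.trans hy) hxy
    have hP := p.P_lam₂_antitoneOn hα hq₀ hz₀ hH₀ hx hy hxy.le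
    simp only at hP ⊢
    linarith

end Params

/-- existence and uniqueness for the reduced Neumann problem:
if `α₂ > α₃` and `q₀ > q₂`, there is a unique `λ₁ > z₀` with `Q(λ₁) = P(λ₂)`,
where `λ₂ ≥ 0` is the unique number with `erf(λ₂√(α₁/α₂)) = H(λ₁)`. -/
theorem neumann_exists_unique (p : Params) (q₀ z₀ : ℝ)
    (hα : p.α₃ < p.α₂)
    (hz₀ : 0 < z₀ ∧ p.H z₀ = 0)
    (hq₀ : p.q2 z₀ < q₀) :
    ∃! lam₁ : ℝ, z₀ < lam₁ ∧ ∃ lam₂ : ℝ, 0 ≤ lam₂ ∧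
      erf (lam₂ * Real.sqrt (p.α₁ / p.α₂)) = p.H lam₁ ∧
      p.Q lam₁ = p.P q₀ lam₂ := by
  obtain ⟨hz₀, hH₀⟩ := hz₀
  have hreduce : ∀ z, (z₀ < z ∧ ∃ t, 0 ≤ t ∧ erf (t * √(p.α₁ / p.α₂)) = p.H z ∧
      p.Q z = p.P q₀ t) ↔ z₀ < z ∧ p.Q z - p.P q₀ (p.lam₂ z) = 0 := fun z => by
    refine and_congr_right fun hz => ?_
    have hlam₂ := fun t => p.eq_lam₂_iff (t := t) hz₀.le hH₀ hz.le
    simp only [Params.ψ] at hlam₂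
    simp only [← and_assoc, hlam₂, exists_eq_left, sub_eq_zero]
  rw [existsUnique_congr hreduce]
  have hq₀' : 0 ≤ q₀ := ((p.q2_pos hz₀).trans hq₀).le
  obtain ⟨b, hb, hzb⟩ :=
    ((p.tendsto_Q_atTop.eventually_gt_atTop (p.P q₀ 0)).and (eventually_ge_atTop z₀)).exists
  refine exists_unique_zero_of_strictMonoOn_Ici
    (p.Q_sub_P_lam₂_strictMonoOn hα hq₀' hz₀.le hH₀) ?_ ?_ hzb ?_
  · exact p.continuous_Q.continuousOn.sub
      ((p.continuous_P q₀).comp_continuousOn (p.continuousOn_lam₂ hz₀.le hH₀))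
  · rw [p.lam₂_self hz₀.le hH₀, ← p.P_q2_zero hz₀.le hH₀, sub_neg]
    exact p.P_zero_strictMono hq₀
  · have hPb := p.P_lam₂_antitoneOn hα hq₀' hz₀.le hH₀ self_mem_Ici hzb hzb
    simp only [p.lam₂_self hz₀.le hH₀] at hPb
    linarith
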